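/- For the PU on–off sampling model under uniform sampling with Γ_c = e^{−λ_f T_c/u}, let w_1,…,w_N be real weights with ∑_{i=1}^{N} w_i = 1, and define the weighted averaging estimator ũ_w(z) = ∑_{i=1}^{N} w_i z_i. Then its mean squared error satisfies V_{ũ_w,N} := ∑_{z ∈ {0,1}^N} (ũ_w(z) − u)² P(z) = u(1−u)·( ∑_{i=1}^{N} w_i² + 2·∑_{j=1}^{N−1} Γ_c^{j} · ∑_{i=1}^{N−j} w_i w_{i+j} ). -/

import Mathlib

/-!
Write `φ b = 1_b - u` for the centred indicator. Since the weights sum to one,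
`ũ_w(z) - u = ∑ w_i φ(z_i)`, so the mean squared error is the quadratic form of `w` against the
correlations `E[φ(z_i) φ(z_j)]`. The chain starts in its stationary law `(1 - u, u)`, and `φ` is an
eigenfunction of every transition matrix `Pr(t)` with eigenvalue `e^{-λ_f t/u}`; conditioning on
the last sample therefore gives `E[φ(z_i) φ(z_j)] = u(1 - u) ∏_{i < k ≤ j} e^{-λ_f T_k/u}`, which is
`u(1 - u) Γ_c^{|i - j|}` under uniform sampling. Summing the resulting Toeplitz form along its
diagonals gives the formula.
-/

open Finset

/-- Transition probabilities of the PU on-off process: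
`transProb u lf t x y = Pr_{xy}(t)` where `false` = idle, `true` = active. -/
noncomputable def transProb (u lf t : ℝ) : Bool → Bool → ℝ
  | false, false => 1 - u + u * Real.exp (-(lf * t) / u)
  | false, true  => 1 - (1 - u + u * Real.exp (-(lf * t) / u))
  | true,  true  => u + (1 - u) * Real.exp (-(lf * t) / u)
  | true,  false => 1 - (u + (1 - u) * Real.exp (-(lf * t) / u))

/-- Probability of a binary sample sequence `z` of length `n + 1`
with inter-sample times `T 1, …, T n`. -/
noncomputable def seqProb (u lf : ℝ) {n : ℕ} (T : ℕ → ℝ) (z : Fin (n + 1) → Bool) : ℝ :=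
  (if z 0 then u else 1 - u) *
    ∏ k : Fin n, transProb u lf (T (k.val + 1)) (z k.castSucc) (z k.succ)

noncomputable def centeredIndicator (u : ℝ) (b : Bool) : ℝ := (if b then 1 else 0) - u

section transProb

variable (u lf t : ℝ)

theorem sum_transProb (x : Bool) : ∑ y, transProb u lf t x y = 1 := by
  cases x <;> simp [transProb]

theorem sum_transProb_mul_centeredIndicator (x : Bool) :
    ∑ y, transProb u lf t x y * centeredIndicator u y
      = Real.exp (-(lf * t) / u) * centeredIndicator u x := by
  cases x <;> simp [transProb, centeredIndicator] <;> ring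

theorem sum_stationary_mul_transProb (y : Bool) :
    ∑ x : Bool, (if x then u else 1 - u) * transProb u lf t x y = if y then u else 1 - u := by
  cases y <;> simp [transProb] <;> ring

end transProb

section seqProb

variable (u lf : ℝ) (T : ℕ → ℝ)

theorem seqProb_snoc {N : ℕ} (z : Fin (N + 1) → Bool) (b : Bool) :
    seqProb u lf T (Fin.snoc z b : Fin (N + 1 + 1) → Bool) =
      seqProb u lf T z * transProb u lf (T (N + 1)) (z (Fin.last N)) b := by
  have h0 : (Fin.snoc z b : Fin (N + 1 + 1) → Bool) 0 = z 0 := Fin.snoc_castSucc (i := 0) ..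
  simp only [seqProb, Fin.prod_univ_castSucc, h0, Fin.snoc_castSucc, Fin.succ_castSucc,
    Fin.val_castSucc, Fin.succ_last, Fin.snoc_last, Fin.val_last, mul_assoc]

theorem sum_seqProb_mul_eq_sum_snoc {N : ℕ} (F : (Fin (N + 1 + 1) → Bool) → ℝ) :
    ∑ z, seqProb u lf T z * F z
      = ∑ z : Fin (N + 1) → Bool,
          seqProb u lf T z *
            ∑ b, transProb u lf (T (N + 1)) (z (Fin.last N)) b * F (Fin.snoc z b) := by
  rw [← (Fin.snocEquiv fun _ => Bool).sum_comp, Fintype.sum_prod_type, sum_comm]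
  simp only [Fin.snocEquiv, Equiv.coe_fn_mk, seqProb_snoc, mul_sum, mul_assoc]

theorem sum_seqProb_mul_apply_last : ∀ {N : ℕ} (g : Bool → ℝ),
    ∑ z : Fin (N + 1) → Bool, seqProb u lf T z * g (z (Fin.last N))
      = ∑ b : Bool, (if b then u else 1 - u) * g b
  | 0, g => by
    rw [← (Equiv.funUnique (Fin 1) Bool).symm.sum_comp]
    simp [seqProb]
  | N + 1, g => by
    simp only [sum_seqProb_mul_eq_sum_snoc, Fin.snoc_last]
    rw [sum_seqProb_mul_apply_last (N := N) fun x => ∑ b, transProb u lf (T (N + 1)) x b * g b]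
    simp only [mul_sum, ← mul_assoc]
    rw [sum_comm]
    simp only [← sum_mul, sum_stationary_mul_transProb]

theorem sum_seqProb_mul_centeredIndicator_last_mul_self {N : ℕ} :
    ∑ z : Fin (N + 1) → Bool,
        seqProb u lf T z *
          (centeredIndicator u (z (Fin.last N)) * centeredIndicator u (z (Fin.last N)))
      = u * (1 - u) := by
  rw [sum_seqProb_mul_apply_last u lf T fun b => centeredIndicator u b * centeredIndicator u b]
  simp [centeredIndicator]
  ring

theorem sum_seqProb_mul_centeredIndicator_mul {N : ℕ} {i j : Fin (N + 1)} (hij : i ≤ j) :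
    ∑ z : Fin (N + 1) → Bool,
        seqProb u lf T z * (centeredIndicator u (z i) * centeredIndicator u (z j))
      = u * (1 - u) * ∏ k ∈ Ioc (i : ℕ) j, Real.exp (-(lf * T k) / u) := by
  induction N with
  | zero =>
    obtain rfl : i = Fin.last 0 := Subsingleton.elim (α := Fin 1) _ _
    obtain rfl : j = Fin.last 0 := Subsingleton.elim (α := Fin 1) _ _
    rw [Ioc_self, prod_empty, mul_one]
    exact sum_seqProb_mul_centeredIndicator_last_mul_self u lf T
  | succ N ih =>
    induction j using Fin.lastCases with
    | last =>
      induction i using Fin.lastCases with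
      | last => simp [sum_seqProb_mul_centeredIndicator_last_mul_self]
      | cast i =>
        have hstep : ∀ x y : Bool,
            ∑ b, transProb u lf (T (N + 1)) y b * (centeredIndicator u x * centeredIndicator u b)
              = Real.exp (-(lf * T (N + 1)) / u) *
                  (centeredIndicator u x * centeredIndicator u y) := by
          intro x y
          rw [mul_left_comm, ← sum_transProb_mul_centeredIndicator, mul_sum]
          exact sum_congr rfl fun b _ => by ring
        simp only [sum_seqProb_mul_eq_sum_snoc, Fin.snoc_castSucc, Fin.snoc_last, hstep,
          mul_left_comm _ (Real.exp _), ← mul_sum, ih (Fin.le_last i), Fin.val_castSucc,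
          Fin.val_last, prod_Ioc_succ_top (Nat.lt_succ_iff.mp i.isLt)]
        ring
    | cast j =>
      obtain ⟨i, rfl⟩ : ∃ i' : Fin (N + 1), i = i'.castSucc :=
        ⟨i.castPred (Fin.ne_last_of_lt (lt_of_le_of_lt hij (Fin.castSucc_lt_last j))), by simp⟩
      simp only [sum_seqProb_mul_eq_sum_snoc, Fin.snoc_castSucc, ← sum_mul, sum_transProb, one_mul]
      simpa using ih (Fin.castSucc_le_castSucc_iff.mp hij)

end seqProb

theorem sum_seqProb_const_mul_centeredIndicator_mul (u lf t : ℝ) {N : ℕ} (i j : Fin (N + 1)) :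
    ∑ z : Fin (N + 1) → Bool,
        seqProb u lf (fun _ => t) z * (centeredIndicator u (z i) * centeredIndicator u (z j))
      = u * (1 - u) * Real.exp (-(lf * t) / u) ^ Nat.dist i j := by
  wlog h : i ≤ j generalizing i j
  · rw [Nat.dist_comm, ← this j i (le_of_not_ge h)]
    exact sum_congr rfl fun z _ => by ring
  rw [sum_seqProb_mul_centeredIndicator_mul u lf _ h, prod_const, Nat.card_Ioc,
    Nat.dist_eq_sub_of_le h]

theorem sum_sum_mul_sq_mul {α ι R : Type*} [Fintype α] [CommSemiring R] (s : Finset ι)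
    (w : ι → R) (x : ι → α → R) (p : α → R) :
    ∑ a, (∑ i ∈ s, w i * x i a) ^ 2 * p a
      = ∑ i ∈ s, ∑ j ∈ s, w i * w j * ∑ a, p a * (x i a * x j a) := by
  simp only [sq, sum_mul, mul_sum]
  rw [sum_comm]
  refine sum_congr rfl fun i _ => ?_
  rw [sum_comm]
  exact sum_congr rfl fun j _ => sum_congr rfl fun a _ => by ring

theorem sum_range_sum_range_of_symm {R : Type*} [CommSemiring R] (a : ℕ → ℕ → R)
    (ha : ∀ i j, a i j = a j i) (N : ℕ) :
    ∑ i ∈ range N, ∑ j ∈ range N, a i j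
      = ∑ i ∈ range N, a i i + 2 * ∑ j ∈ range N, ∑ i ∈ range j, a i j := by
  induction N with
  | zero => simp
  | succ N ih =>
    simp only [sum_range_succ, sum_add_distrib, ih, ha N]
    ring

theorem sum_range_sum_range_eq_sum_Icc_sum_range {M : Type*} [AddCommMonoid M] (f : ℕ → ℕ → M)
    (n : ℕ) :
    ∑ j ∈ range (n + 1), ∑ i ∈ range j, f i j
      = ∑ d ∈ Icc 1 n, ∑ i ∈ range (n + 1 - d), f i (i + d) := by
  rw [sum_sigma', sum_sigma']
  refine sum_nbij' (fun p => ⟨p.1 - p.2, p.2⟩) (fun p => ⟨p.2 + p.1, p.2⟩) ?_ ?_ ?_ ?_ ?_ <;>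
    simp only [mem_range, mem_Icc, mem_sigma, Sigma.forall]
  · intro a b h
    omega
  · intro a b h
    omega
  · intro a b h
    rw [Nat.add_sub_cancel' h.2.le]
  · intro a b _
    rw [Nat.add_sub_cancel_left]
  · intro a b h
    rw [Nat.add_sub_cancel' h.2.le]

theorem sum_range_sum_range_mul_dist {R : Type*} [CommSemiring R] (w c : ℕ → R) (n : ℕ) :
    ∑ i ∈ range (n + 1), ∑ j ∈ range (n + 1), w i * w j * c (Nat.dist i j)
      = c 0 * ∑ i ∈ range (n + 1), w i ^ 2
        + 2 * ∑ d ∈ Icc 1 n, c d * ∑ i ∈ range (n + 1 - d), w i * w (i + d) := by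
  rw [sum_range_sum_range_of_symm _ (fun i j => by rw [Nat.dist_comm]; ring),
    sum_range_sum_range_eq_sum_Icc_sum_range]
  simp only [Nat.dist_self, Nat.dist_eq_sub_of_le (Nat.le_add_right _ _), Nat.add_sub_cancel_left,
    mul_sum _ _ (c _)]
  congr 1
  · exact sum_congr rfl fun i _ => by ring
  · exact congrArg _ (sum_congr rfl fun d _ => sum_congr rfl fun i _ => by ring)

/-- The paper's `w_i` is `w (i - 1)` and its `N` is `n + 1`. -/
theorem weighted_estimator_mse_general (u lf Tc : ℝ) (n : ℕ) (w : ℕ → ℝ)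
    (hw : ∑ i ∈ Finset.range (n + 1), w i = 1) :
    ∑ z : Fin (n + 1) → Bool,
        ((∑ i : Fin (n + 1), w i.val * (if z i then (1 : ℝ) else 0)) - u) ^ 2
          * seqProb u lf (fun _ => Tc) z
      = u * (1 - u) *
          (∑ i ∈ Finset.range (n + 1), w i ^ 2
            + 2 * ∑ j ∈ Finset.Icc 1 n, (Real.exp (-(lf * Tc) / u)) ^ j *
                ∑ i ∈ Finset.range (n + 1 - j), w i * w (i + j)) := by
  have hcentered : ∀ z : Fin (n + 1) → Bool,
      (∑ i : Fin (n + 1), w i.val * (if z i then (1 : ℝ) else 0)) - u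
        = ∑ i : Fin (n + 1), w i.val * centeredIndicator u (z i) := by
    intro z
    simp only [centeredIndicator, mul_sub, sum_sub_distrib, ← sum_mul,
      Fin.sum_univ_eq_sum_range w, hw, one_mul]
  have htoeplitz := sum_range_sum_range_mul_dist w (Real.exp (-(lf * Tc) / u) ^ ·) n
  rw [pow_zero, one_mul] at htoeplitz
  rw [← htoeplitz]
  simp only [sum_range, hcentered, sum_sum_mul_sq_mul,
    sum_seqProb_const_mul_centeredIndicator_mul, mul_sum]
  exact sum_congr rfl fun i _ => sum_congr rfl fun j _ => by ring

/-- mean squared error of the weighted averaging estimator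
`ũ_w(z) = ∑ w_i z_i` (weights summing to 1, indexed 0-based here, so the
paper's `w_i` is `w (i-1)`) under uniform sampling with `Γ_c = e^{-λ_f T_c/u}`
and `N = n + 1` samples. -/
theorem weighted_estimator_mse (u lf Tc : ℝ) (hu : 0 < u) (hu1 : u < 1)
    (hlf : 0 < lf) (hTc : 0 < Tc) (n : ℕ) (hn : 1 ≤ n) (w : ℕ → ℝ)
    (hw : ∑ i ∈ Finset.range (n + 1), w i = 1) :
    ∑ z : Fin (n + 1) → Bool,
        ((∑ i : Fin (n + 1), w i.val * (if z i then (1 : ℝ) else 0)) - u) ^ 2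
          * seqProb u lf (fun _ => Tc) z
      = u * (1 - u) *
          (∑ i ∈ Finset.range (n + 1), w i ^ 2
            + 2 * ∑ j ∈ Finset.Icc 1 n, (Real.exp (-(lf * Tc) / u)) ^ j *
                ∑ i ∈ Finset.range (n + 1 - j), w i * w (i + j)) :=
  weighted_estimator_mse_general u lf Tc n w hw
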